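/- arXiv:0903.4024 — 2 statements merged into one kernel-verified Lean document; each statement's English description precedes it below -/
import Mathlib

section
/- Suppose that for every continuous bounded G, ∫ G(x₁,x₂) x₁ ν̂(dx₁,dx₂) applied to G(x₁,x₂) = e^{-λ₁x₁ - λ₂x₂} equals 2β / (φ(λ₁)·φ(λ₂)) for all λ₁, λ₂ > 0, where φ = ψ'∘ψ^{-1}. Then ∫ (1/x₂)(1 − e^{-λ₁x₁})(1 − e^{-λ₂x₂}) ν̂(dx₁,dx₂) = 2β ψ^{-1}(λ₁) ψ^{-1}(λ₂), obtained by integrating in λ₁ and λ₂ and using (ψ^{-1})'(λ) = 1/ψ'(ψ^{-1}(λ)) and ψ^{-1}(0) = 0. -/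
open MeasureTheory Real Set Function


lemma aux_exp_integral {c Λ : ℝ} (hc : 0 < c) (hΛ : 0 ≤ Λ) :
    ∫ l in Ioc (0:ℝ) Λ, Real.exp (-(l * c)) = (1 - Real.exp (-(Λ * c))) / c := by
  rw [← intervalIntegral.integral_of_le hΛ]
  have hF : ∀ l ∈ uIcc (0:ℝ) Λ, HasDerivAt (fun l => -Real.exp (-(l * c)) / c)
      (Real.exp (-(l * c))) l := by
    intro l _
    have h1 : HasDerivAt (fun l : ℝ => -(l * c)) (-c) l := by
      simpa using ((hasDerivAt_id l).mul_const c).fun_neg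
    have h2 := (h1.exp).fun_neg.div_const c
    exact h2.congr_deriv (by field_simp)
  have hint : IntervalIntegrable (fun l => Real.exp (-(l * c))) volume 0 Λ := by
    apply Continuous.intervalIntegrable
    continuity
  rw [intervalIntegral.integral_eq_sub_of_hasDerivAt hF hint]
  simp
  ring

/-- from the double Laplace transform identity
`∫ x₁ e^{-λ₁x₁-λ₂x₂} ν̂(dx) = 2β/(ψ'(ψ⁻¹(λ₁)) ψ'(ψ⁻¹(λ₂)))` one deduces
`∫ (1/x₂)(1-e^{-λ₁x₁})(1-e^{-λ₂x₂}) ν̂(dx) = 2β ψ⁻¹(λ₁) ψ⁻¹(λ₂)`. -/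
theorem stmt_5 (β : ℝ) (hβ : 0 < β)
    (ψ ψinv ψ' : ℝ → ℝ)
    (hψ0 : ψ 0 = 0)
    (hmono : StrictMonoOn ψ (Set.Ici 0))
    (hconv : ConvexOn ℝ (Set.Ici 0) ψ)
    (hderiv : ∀ x ≥ (0:ℝ), HasDerivAt ψ (ψ' x) x)
    (hd0 : 0 ≤ ψ' 0)
    (hinv₁ : ∀ x ≥ (0:ℝ), ψinv (ψ x) = x)
    (hinv₂ : ∀ y ≥ (0:ℝ), ψ (ψinv y) = y ∧ 0 ≤ ψinv y)
    (νhat : Measure (ℝ × ℝ))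
    (hνsupp : νhat ({p : ℝ × ℝ | ¬ (0 < p.1 ∧ 0 < p.2)}) = 0)
    (hLaplace : ∀ l₁ > (0:ℝ), ∀ l₂ > (0:ℝ),
      ∫ p, p.1 * exp (-l₁ * p.1 - l₂ * p.2) ∂νhat
        = 2 * β / (ψ' (ψinv l₁) * ψ' (ψinv l₂))) :
    ∀ l₁ > (0:ℝ), ∀ l₂ > (0:ℝ),
      ∫ p, (1 / p.2) * (1 - exp (-l₁ * p.1)) * (1 - exp (-l₂ * p.2)) ∂νhat
        = 2 * β * ψinv l₁ * ψinv l₂ := by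
  -- ψ positive on positives
  have hψpos : ∀ x > (0:ℝ), 0 < ψ x := by
    intro x hx
    have := hmono (le_refl (0:ℝ)) (le_of_lt hx) hx
    rwa [hψ0] at this
  -- derivative positive on positives
  have hd_pos : ∀ x > (0:ℝ), 0 < ψ' x := by
    intro x hx
    have h1 := hconv.slope_le_of_hasDerivAt self_mem_Ici (show x ∈ Ici 0 from hx.le) hx
      (hderiv x hx.le)
    refine lt_of_lt_of_le ?_ h1
    rw [slope_def_field, hψ0, sub_zero, sub_zero]
    exact div_pos (hψpos x hx) hx
  -- derivative monotone
  have hd_mono : ∀ a b : ℝ, 0 ≤ a → a ≤ b → ψ' a ≤ ψ' b := by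
    intro a b ha hab
    rcases eq_or_lt_of_le hab with rfl | h
    · exact le_rfl
    · exact (hconv.le_slope_of_hasDerivAt (show a ∈ Ici 0 from ha) (show b ∈ Ici 0 from ha.trans hab) h (hderiv a ha)).trans
        (hconv.slope_le_of_hasDerivAt (show a ∈ Ici 0 from ha) (show b ∈ Ici 0 from ha.trans hab) h (hderiv b (ha.trans hab)))
  -- ψinv basics
  have hinv0 : ψinv 0 = 0 := by have := hinv₁ 0 le_rfl; rwa [hψ0] at this
  have hinvnn : ∀ y ≥ (0:ℝ), 0 ≤ ψinv y := fun y hy => (hinv₂ y hy).2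
  have hinvmono : ∀ a b : ℝ, 0 ≤ a → a ≤ b → ψinv a ≤ ψinv b := by
    intro a b ha hab
    by_contra h
    push_neg at h
    have := hmono (hinvnn b (ha.trans hab)) (hinvnn a ha) h
    rw [(hinv₂ a ha).1, (hinv₂ b (ha.trans hab)).1] at this
    exact absurd this (not_lt.2 hab)
  have hinvpos : ∀ y > (0:ℝ), 0 < ψinv y := by
    intro y hy
    rcases lt_or_eq_of_le (hinvnn y hy.le) with h | h
    · exact h
    · exfalso
      have := (hinv₂ y hy.le).1
      rw [← h, hψ0] at this
      exact absurd this.symm (ne_of_gt hy)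
  have hφpos : ∀ l > (0:ℝ), 0 < ψ' (ψinv l) := fun l hl => hd_pos _ (hinvpos l hl)
  -- ψinv strict mono-ish comparison helpers
  have hinvlt : ∀ a b : ℝ, 0 ≤ a → a < b → ψinv a < ψinv b := by
    intro a b ha hab
    rcases lt_or_eq_of_le (hinvmono a b ha hab.le) with h | h
    · exact h
    · exfalso
      have := congrArg ψ h
      rw [(hinv₂ a ha).1, (hinv₂ b (ha.trans hab.le)).1] at this
      exact absurd this (ne_of_lt hab)
  have hψnn : ∀ x ≥ (0:ℝ), 0 ≤ ψ x := by
    intro x hx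
    rcases eq_or_lt_of_le hx with rfl | h
    · exact le_of_eq hψ0.symm
    · exact (hψpos x h).le
  -- continuity of ψinv at positive points
  have hinvcont : ∀ y > (0:ℝ), ContinuousAt ψinv y := by
    intro y hy
    rw [ContinuousAt]
    apply tendsto_order.2
    constructor
    · intro a ha
      rcases lt_or_ge a 0 with h0 | h0
      · filter_upwards [eventually_gt_nhds hy] with z hz
        exact lt_of_lt_of_le h0 (hinvnn z hz.le)
      · have haψ : ψ a < y := by
          have := hmono (show a ∈ Ici 0 from h0) (hinvnn y hy.le) ha
          rwa [(hinv₂ y hy.le).1] at this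
        filter_upwards [eventually_gt_nhds haψ] with z hz
        by_contra hc
        push_neg at hc
        have hz0 : 0 ≤ z := le_of_lt (lt_of_le_of_lt (hψnn a h0) hz)
        have := hmono.monotoneOn (hinvnn z hz0) (show a ∈ Ici 0 from h0) hc
        rw [(hinv₂ z hz0).1] at this
        exact absurd hz (not_lt.2 this)
    · intro b hb
      have hb0 : 0 < b := lt_of_le_of_lt (hinvnn y hy.le) hb
      have hbψ : y < ψ b := by
        have := hmono (hinvnn y hy.le) (show b ∈ Ici 0 from hb0.le) hb
        rwa [(hinv₂ y hy.le).1] at this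
      filter_upwards [eventually_lt_nhds hbψ, eventually_gt_nhds hy] with z hz hz0
      calc ψinv z < ψinv (ψ b) := hinvlt z (ψ b) hz0.le hz
        _ = b := hinv₁ b hb0.le
  -- derivative of the inverse
  have hinvderiv : ∀ l > (0:ℝ), HasDerivAt ψinv (ψ' (ψinv l))⁻¹ l := by
    intro l hl
    apply HasDerivAt.of_local_left_inverse (hinvcont l hl)
      (hderiv (ψinv l) (hinvnn l hl.le)) (ne_of_gt (hφpos l hl))
    filter_upwards [eventually_gt_nhds hl] with z hz
    exact (hinv₂ z hz.le).1
  -- g = 1/φ is antitone on Ioi 0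
  set g : ℝ → ℝ := fun l => (ψ' (ψinv l))⁻¹ with hg_def
  have hg_anti : AntitoneOn g (Ioi 0) := by
    intro a ha b hb hab
    exact inv_anti₀ (hφpos a ha) (hd_mono _ _ (hinvnn a (le_of_lt ha)) (hinvmono a b (le_of_lt ha) hab))
  have hg_pos : ∀ l > (0:ℝ), 0 < g l := fun l hl => inv_pos.2 (hφpos l hl)
  -- FTC on [ε, Λ]
  have hFTCε : ∀ Λ > (0:ℝ), ∀ ε > (0:ℝ), ε ≤ Λ →
      IntegrableOn g (Ioc ε Λ) volume ∧ ∫ l in Ioc ε Λ, g l = ψinv Λ - ψinv ε := by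
    intro Λ hΛ ε hε hεΛ
    have huIcc : uIcc ε Λ = Icc ε Λ := uIcc_of_le hεΛ
    have hii : IntervalIntegrable g volume ε Λ := by
      apply AntitoneOn.intervalIntegrable
      rw [huIcc]
      exact hg_anti.mono (fun x hx => lt_of_lt_of_le hε hx.1)
    have hio : IntegrableOn g (Ioc ε Λ) volume :=
      (intervalIntegrable_iff_integrableOn_Ioc_of_le hεΛ).1 hii
    refine ⟨hio, ?_⟩
    rw [← intervalIntegral.integral_of_le hεΛ]
    apply intervalIntegral.integral_eq_sub_of_hasDerivAt ?_ hii
    intro x hx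
    rw [huIcc] at hx
    exact hinvderiv x (lt_of_lt_of_le hε hx.1)
  -- right-continuity of ψinv at 0 along Λ/(n+1)
  have htend0 : ∀ Λ > (0:ℝ), Filter.Tendsto (fun n : ℕ => ψinv (Λ / (n + 1))) Filter.atTop (nhds 0) := by
    intro Λ hΛ
    apply tendsto_order.2
    constructor
    · intro a ha
      filter_upwards with n
      exact lt_of_lt_of_le ha (hinvnn _ (by positivity))
    · intro b hb
      have hψb : 0 < ψ (b / 2) := hψpos _ (by linarith)
      have : Filter.Tendsto (fun n : ℕ => Λ / (n + 1)) Filter.atTop (nhds 0) := by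
        have h1 : Filter.Tendsto (fun n : ℕ => 1 / ((n:ℝ) + 1)) Filter.atTop (nhds 0) :=
          tendsto_one_div_add_atTop_nhds_zero_nat
        have := h1.const_mul Λ
        simpa [div_eq_mul_inv, mul_comm] using this
      filter_upwards [this.eventually (eventually_lt_nhds hψb)] with n hn
      calc ψinv (Λ / (n + 1)) ≤ ψinv (ψ (b / 2)) :=
            hinvmono _ _ (by positivity) hn.le
        _ = b / 2 := hinv₁ _ (by linarith)
        _ < b := by linarith
  -- FTC on (0, Λ]
  have hFTC : ∀ Λ > (0:ℝ), IntegrableOn g (Ioc 0 Λ) volume ∧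
      ∫ l in Ioc (0:ℝ) Λ, g l = ψinv Λ := by
    intro Λ hΛ
    set a : ℕ → ℝ := fun n => Λ / (n + 1) with ha_def
    have ha_pos : ∀ n : ℕ, 0 < a n := fun n => by positivity
    have ha_le : ∀ n : ℕ, a n ≤ Λ := by
      intro n
      rw [ha_def]
      rw [div_le_iff₀ (by positivity)]
      nlinarith [Nat.cast_nonneg (α := ℝ) n]
    have ha_tend : Filter.Tendsto a Filter.atTop (nhds 0) := by
      have h1 : Filter.Tendsto (fun n : ℕ => 1 / ((n:ℝ) + 1)) Filter.atTop (nhds 0) :=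
        tendsto_one_div_add_atTop_nhds_zero_nat
      have := h1.const_mul Λ
      simpa [ha_def, div_eq_mul_inv, mul_comm] using this
    have hseg : ∀ n : ℕ, IntegrableOn g (Ioc (a n) Λ) volume ∧
        ∫ l in Ioc (a n) Λ, g l = ψinv Λ - ψinv (a n) :=
      fun n => hFTCε Λ hΛ (a n) (ha_pos n) (ha_le n)
    have hnorm : ∀ n : ℕ, ∫ l in Ioc (a n) Λ, ‖g l‖ = ψinv Λ - ψinv (a n) := by
      intro n
      rw [← (hseg n).2]
      apply setIntegral_congr_fun measurableSet_Ioc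
      intro x hx
      exact Real.norm_of_nonneg (hg_pos x (lt_trans (ha_pos n) hx.1)).le
    have hio : IntegrableOn g (Ioc 0 Λ) volume := by
      apply integrableOn_Ioc_of_intervalIntegral_norm_bounded_left (I := ψinv Λ)
        (fun n => (hseg n).1) ha_tend
      · filter_upwards with n
        rw [hnorm n]
        have := hinvnn (a n) (ha_pos n).le
        linarith
    refine ⟨hio, ?_⟩
    have hunion : (⋃ n, Ioc (a n) Λ) = Ioc 0 Λ := by
      ext x
      simp only [mem_iUnion, mem_Ioc]
      constructor
      · rintro ⟨n, h1, h2⟩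
        exact ⟨lt_trans (ha_pos n) h1, h2⟩
      · rintro ⟨h1, h2⟩
        have := ha_tend.eventually (eventually_lt_nhds h1)
        rcases this.exists with ⟨n, hn⟩
        exact ⟨n, hn, h2⟩
    have hmono_s : Monotone (fun n : ℕ => Ioc (a n) Λ) := by
      intro m n hmn
      apply Ioc_subset_Ioc _ le_rfl
      have hc : (m:ℝ) ≤ n := Nat.cast_le.2 hmn
      apply div_le_div_of_nonneg_left hΛ.le (by positivity) (by linarith)
    have h1 := tendsto_setIntegral_of_monotone (fun n => measurableSet_Ioc) hmono_s
      (hunion ▸ hio)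
    rw [hunion] at h1
    have h2 : Filter.Tendsto (fun n : ℕ => ∫ l in Ioc (a n) Λ, g l) Filter.atTop
        (nhds (ψinv Λ)) := by
      have h3 : Filter.Tendsto (fun n : ℕ => ψinv Λ - ψinv (a n)) Filter.atTop
          (nhds (ψinv Λ - 0)) := (tendsto_const_nhds).sub (htend0 Λ hΛ)
      rw [sub_zero] at h3
      exact h3.congr (fun n => ((hseg n).2).symm)
    exact tendsto_nhds_unique h1 h2

  -- support set facts
  have hS_meas : MeasurableSet {p : ℝ × ℝ | 0 < p.1 ∧ 0 < p.2} :=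
    ((isOpen_lt continuous_const continuous_fst).inter
      (isOpen_lt continuous_const continuous_snd)).measurableSet
  have hS_ae : ∀ᵐ p ∂νhat, 0 < p.1 ∧ 0 < p.2 := by
    rw [ae_iff]
    exact hνsupp
  -- basic integrability and values from the Laplace hypothesis
  have hval : ∀ a > (0:ℝ), ∀ b > (0:ℝ),
      Integrable (fun p : ℝ × ℝ => p.1 * exp (-a * p.1 - b * p.2)) νhat ∧
      ∫ p, p.1 * exp (-a * p.1 - b * p.2) ∂νhat
        = 2 * β / (ψ' (ψinv a) * ψ' (ψinv b)) := by
    intro a ha b hb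
    have hrhs : 0 < 2 * β / (ψ' (ψinv a) * ψ' (ψinv b)) :=
      div_pos (by linarith) (mul_pos (hφpos a ha) (hφpos b hb))
    have hint : Integrable (fun p : ℝ × ℝ => p.1 * exp (-a * p.1 - b * p.2)) νhat := by
      by_contra hc
      have h0 := hLaplace a ha b hb
      rw [integral_undef hc] at h0
      linarith
    exact ⟨hint, hLaplace a ha b hb⟩
  -- σ-finiteness of νhat
  haveI : SigmaFinite νhat := by
    refine ⟨⟨⟨fun n => {p : ℝ × ℝ | p.1 ≤ 0} ∪ {p : ℝ × ℝ | p.2 ≤ 0} ∪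
      {p : ℝ × ℝ | 1 / (n + 1) ≤ p.1 * exp (-1 * p.1 - 1 * p.2)},
      fun _ => trivial, ?_, ?_⟩⟩⟩
    · intro n
      have h1 : νhat ({p : ℝ × ℝ | p.1 ≤ 0} ∪ {p : ℝ × ℝ | p.2 ≤ 0}) = 0 := by
        apply measure_mono_null _ hνsupp
        rintro p (hp | hp) hq
        · exact absurd hq.1 (not_lt.2 hp)
        · exact absurd hq.2 (not_lt.2 hp)
      have h2 : νhat {p : ℝ × ℝ | 1 / (n + 1) ≤ p.1 * exp (-1 * p.1 - 1 * p.2)} < ⊤ :=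
        (hval 1 one_pos 1 one_pos).1.measure_ge_lt_top (by positivity)
      calc νhat _ ≤ νhat ({p : ℝ × ℝ | p.1 ≤ 0} ∪ {p : ℝ × ℝ | p.2 ≤ 0}) +
            νhat {p : ℝ × ℝ | 1 / (n + 1) ≤ p.1 * exp (-1 * p.1 - 1 * p.2)} :=
            measure_union_le _ _
        _ < ⊤ := by rw [h1, zero_add]; exact h2
    · apply eq_univ_of_forall
      intro p
      rcases le_or_gt p.1 0 with h1 | h1
      · exact mem_iUnion.2 ⟨0, Or.inl (Or.inl h1)⟩
      rcases le_or_gt p.2 0 with h2 | h2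
      · exact mem_iUnion.2 ⟨0, Or.inl (Or.inr h2)⟩
      have hfp : 0 < p.1 * exp (-1 * p.1 - 1 * p.2) := mul_pos h1 (exp_pos _)
      obtain ⟨n, hn⟩ := exists_nat_one_div_lt hfp
      exact mem_iUnion.2 ⟨n, Or.inr (by push_cast; exact hn.le)⟩
  -- main computation
  intro l₁ hl₁ l₂ hl₂
  set I₁ : Set ℝ := Ioc (0:ℝ) l₁ with hI₁_def
  set I₂ : Set ℝ := Ioc (0:ℝ) l₂ with hI₂_def
  set A : Set (ℝ × ℝ) := I₁ ×ˢ I₂ with hA_def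
  have hA_meas : MeasurableSet A := measurableSet_Ioc.prod measurableSet_Ioc
  have hprodm : (volume : Measure (ℝ × ℝ)).restrict A
      = (volume.restrict I₁).prod (volume.restrict I₂) := by
    rw [hA_def, Measure.volume_eq_prod, Measure.prod_restrict]
  set F : (ℝ × ℝ) → (ℝ × ℝ) → ℝ := fun p l => p.1 * exp (-l.1 * p.1 - l.2 * p.2) with hF_def
  -- pointwise computation of the inner double integral
  have hpoint : ∀ p : ℝ × ℝ, 0 < p.1 → 0 < p.2 →
      (∫ l in A, F p l) = (1 / p.2) * (1 - exp (-l₁ * p.1)) * (1 - exp (-l₂ * p.2)) := by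
    intro p hp1 hp2
    have hcong : ∀ l : ℝ × ℝ, F p l = (p.1 * exp (-(l.1 * p.1))) * exp (-(l.2 * p.2)) := by
      intro l
      simp only [hF_def]
      rw [show -l.1 * p.1 - l.2 * p.2 = -(l.1 * p.1) + -(l.2 * p.2) by ring, Real.exp_add]
      ring
    simp only [hcong]
    rw [hprodm, integral_prod_mul (fun x => p.1 * exp (-(x * p.1))) (fun y => exp (-(y * p.2)))]
    rw [MeasureTheory.integral_const_mul]
    rw [hI₁_def, hI₂_def, aux_exp_integral hp1 hl₁.le, aux_exp_integral hp2 hl₂.le]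
    simp only [neg_mul]
    field_simp
  -- joint continuity
  have hFcont : Continuous (uncurry F) := by
    simp only [hF_def]
    fun_prop
  -- value of the inner νhat-lintegral
  have hlbound : ∀ l : ℝ × ℝ, 0 < l.1 → 0 < l.2 →
      (∫⁻ p, ‖F p l‖₊ ∂νhat) = ENNReal.ofReal (2 * β / (ψ' (ψinv l.1) * ψ' (ψinv l.2))) := by
    intro l h1 h2
    obtain ⟨hint, hv⟩ := hval l.1 h1 l.2 h2
    have hnn : 0 ≤ᵐ[νhat] fun p : ℝ × ℝ => p.1 * exp (-l.1 * p.1 - l.2 * p.2) := by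
      filter_upwards [hS_ae] with p hp
      exact mul_nonneg hp.1.le (exp_pos _).le
    rw [← hv, ofReal_integral_eq_lintegral_ofReal hint hnn]
    apply lintegral_congr_ae
    filter_upwards [hS_ae] with p hp
    rw [← ENNReal.ofReal_coe_nnreal, coe_nnnorm]
    congr 1
    exact Real.norm_of_nonneg (mul_nonneg hp.1.le (exp_pos _).le)
  -- measurability of g on the intervals
  have hgm₁ : AEMeasurable g (volume.restrict I₁) := (hFTC l₁ hl₁).1.aemeasurable
  have hgm₂ : AEMeasurable g (volume.restrict I₂) := (hFTC l₂ hl₂).1.aemeasurable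
  -- product integrability
  have hIunc : Integrable (uncurry F) (νhat.prod (volume.restrict A)) := by
    refine ⟨hFcont.aestronglyMeasurable, ?_⟩
    show (∫⁻ q, (‖uncurry F q‖₊ : ENNReal) ∂(νhat.prod (volume.restrict A))) < ⊤
    rw [lintegral_prod_symm _ hFcont.measurable.nnnorm.coe_nnreal_ennreal.aemeasurable]
    have e1 : (∫⁻ l in A, (∫⁻ p, ‖F p l‖₊ ∂νhat))
        = ∫⁻ l in A, ENNReal.ofReal (2 * β * g l.1) * ENNReal.ofReal (g l.2) := by
      apply setLIntegral_congr_fun hA_meas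
      intro l hl
      dsimp only
      rw [hlbound l hl.1.1 hl.2.1]
      rw [← ENNReal.ofReal_mul (by have := hg_pos l.1 hl.1.1; positivity)]
      congr 1
      simp only [hg_def]
      have := (hφpos l.1 hl.1.1).ne'
      have := (hφpos l.2 hl.2.1).ne'
      field_simp
    calc (∫⁻ l in A, (∫⁻ p, ‖F p l‖₊ ∂νhat))
        = ∫⁻ l in A, ENNReal.ofReal (2 * β * g l.1) * ENNReal.ofReal (g l.2) := e1
      _ = (∫⁻ x in I₁, ENNReal.ofReal (2 * β * g x)) * ∫⁻ y in I₂, ENNReal.ofReal (g y) := by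
          rw [hprodm]
          exact lintegral_prod_mul ((hgm₁.const_mul (2 * β)).ennreal_ofReal) hgm₂.ennreal_ofReal
      _ < ⊤ := by
          have hnn₁ : 0 ≤ᵐ[volume.restrict I₁] fun x => 2 * β * g x := by
            filter_upwards [ae_restrict_mem measurableSet_Ioc] with x hx
            have := hg_pos x hx.1
            positivity
          have hnn₂ : 0 ≤ᵐ[volume.restrict I₂] fun x => g x := by
            filter_upwards [ae_restrict_mem measurableSet_Ioc] with x hx
            exact (hg_pos x hx.1).le
          rw [← ofReal_integral_eq_lintegral_ofReal ((hFTC l₁ hl₁).1.const_mul (2 * β)) hnn₁,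
            ← ofReal_integral_eq_lintegral_ofReal (hFTC l₂ hl₂).1 hnn₂]
          exact ENNReal.mul_lt_top ENNReal.ofReal_lt_top ENNReal.ofReal_lt_top
  -- put everything together
  calc ∫ p, (1 / p.2) * (1 - exp (-l₁ * p.1)) * (1 - exp (-l₂ * p.2)) ∂νhat
      = ∫ p, (∫ l in A, F p l) ∂νhat := by
        apply integral_congr_ae
        filter_upwards [hS_ae] with p hp
        exact (hpoint p hp.1 hp.2).symm
    _ = ∫ l in A, (∫ p, F p l ∂νhat) := integral_integral_swap hIunc
    _ = ∫ l in A, (2 * β * g l.1) * g l.2 := by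
        apply setIntegral_congr_fun hA_meas
        intro l hl
        have h := (hval l.1 hl.1.1 l.2 hl.2.1).2
        simp only [hF_def]
        rw [h]
        simp only [hg_def]
        have := (hφpos l.1 hl.1.1).ne'
        have := (hφpos l.2 hl.2.1).ne'
        field_simp
    _ = (∫ x in I₁, 2 * β * g x) * ∫ y in I₂, g y := by
        rw [hprodm]
        exact integral_prod_mul (fun x => 2 * β * g x) g
    _ = (2 * β * ψinv l₁) * ψinv l₂ := by
        rw [MeasureTheory.integral_const_mul, (hFTC l₁ hl₁).2, (hFTC l₂ hl₂).2]
    _ = 2 * β * ψinv l₁ * ψinv l₂ := by ring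
end

section
/- For a continuous function g : [0,σ] → ℝ₊ with g(0) = g(σ) = 0, the quotient metric space T_g = [0,σ]/∼, where s ∼ t iff d(s,t) = 0 with d(s,t) = g(s)+g(t)−2 inf_{[s∧t, s∨t]} g, is a real tree: between any two points there is a unique isometric arc, and every injective path between them has the same image as this arc. -/
open Set

section RealTreeAux


variable {σ : ℝ} {g : ℝ → ℝ}

noncomputable def MM (g : ℝ → ℝ) (a b : ℝ) : ℝ := sInf (g '' Icc a b)

lemma Mbdd (hg : ContinuousOn g (Icc 0 σ)) {a b : ℝ} (h0 : 0 ≤ a) (hb : b ≤ σ) :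
    BddBelow (g '' Icc a b) :=
  (isCompact_Icc.image_of_continuousOn (hg.mono (Icc_subset_Icc h0 hb))).bddBelow

lemma Mle (hg : ContinuousOn g (Icc 0 σ)) {a b x : ℝ} (h0 : 0 ≤ a) (hb : b ≤ σ)
    (hx : x ∈ Icc a b) : MM g a b ≤ g x :=
  csInf_le (Mbdd hg h0 hb) (mem_image_of_mem g hx)

lemma leM {a b c : ℝ} (hab : a ≤ b) (h : ∀ x ∈ Icc a b, c ≤ g x) : c ≤ MM g a b :=
  le_csInf ((nonempty_Icc.2 hab).image g) (by rintro y ⟨x, hx, rfl⟩; exact h x hx)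

lemma Mmono (hg : ContinuousOn g (Icc 0 σ)) {a b a' b' : ℝ} (h0 : 0 ≤ a') (hb : b' ≤ σ)
    (hab : a ≤ b) (hsub : Icc a b ⊆ Icc a' b') : MM g a' b' ≤ MM g a b :=
  csInf_le_csInf (Mbdd hg h0 hb) ((nonempty_Icc.2 hab).image g) (image_mono (f := g) hsub)

lemma Mmem (hg : ContinuousOn g (Icc 0 σ)) {a b : ℝ} (h0 : 0 ≤ a) (hab : a ≤ b) (hb : b ≤ σ) :
    ∃ x ∈ Icc a b, g x = MM g a b := by
  obtain ⟨x, hx, hmin⟩ := isCompact_Icc.exists_isMinOn (nonempty_Icc.2 hab)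
      (hg.mono (Icc_subset_Icc h0 hb))
  refine ⟨x, hx, le_antisymm ?_ (Mle hg h0 hb hx)⟩
  exact leM hab fun y hy => hmin hy

lemma Msplit (hg : ContinuousOn g (Icc 0 σ)) {a b c : ℝ} (h0 : 0 ≤ a) (hb : b ≤ σ)
    (hac : a ≤ c) (hcb : c ≤ b) : MM g a b = min (MM g a c) (MM g c b) := by
  have hsub : Icc a b = Icc a c ∪ Icc c b := (Icc_union_Icc_eq_Icc hac hcb).symm
  have h0c : (0:ℝ) ≤ c := le_trans h0 hac
  have hcσ : c ≤ σ := le_trans hcb hb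
  rw [MM, hsub, image_union, csInf_union (Mbdd hg h0 hcσ) ((nonempty_Icc.2 hac).image g)
    (Mbdd hg h0c hb) ((nonempty_Icc.2 hcb).image g)]
  rfl

lemma L1 (hg : ContinuousOn g (Icc 0 σ)) {s t a : ℝ} (hs : 0 ≤ s) (hst : s ≤ t) (ht : t ≤ σ)
    (ha : MM g s t < a) (hag : a ≤ g s) :
    ∃ τ ∈ Icc s t, g τ = a ∧ MM g s τ = a ∧ MM g τ t = MM g s t := by
  set S : Set ℝ := {q ∈ Icc s t | a ≤ MM g s q} with hS
  have hsS : s ∈ S := by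
    refine ⟨⟨le_refl s, hst⟩, ?_⟩
    have : MM g s s = g s := by
      rw [MM, Icc_self, image_singleton, csInf_singleton]
    rw [this]; exact hag
  have hSne : S.Nonempty := ⟨s, hsS⟩
  have hSbdd : BddAbove S := ⟨t, fun q hq => hq.1.2⟩
  set τ := sSup S with hτdef
  have hsτ : s ≤ τ := le_csSup hSbdd hsS
  have hτt : τ ≤ t := csSup_le hSne fun q hq => hq.1.2
  have hτΙ : τ ∈ Icc 0 σ := ⟨le_trans hs hsτ, le_trans hτt ht⟩
  -- every x in [s, τ) satisfies a ≤ g x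
  have hlt : ∀ x ∈ Ico s τ, a ≤ g x := by
    intro x hx
    obtain ⟨q, hqS, hxq⟩ := exists_lt_of_lt_csSup hSne hx.2
    exact le_trans hqS.2 (Mle hg hs (le_trans hqS.1.2 ht) ⟨hx.1, le_of_lt hxq⟩)
  -- a ≤ g τ
  have hgτa : a ≤ g τ := by
    rcases eq_or_lt_of_le hsτ with h | h
    · rw [← h]; exact hag
    · have hC : IsClosed {x ∈ Icc (0:ℝ) σ | g x ∈ Ici a} :=
        hg.preimage_isClosed_of_isClosed isClosed_Icc isClosed_Ici
      have hsub : Ico s τ ⊆ {x ∈ Icc (0:ℝ) σ | g x ∈ Ici a} := by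
        intro x hx
        exact ⟨⟨le_trans hs hx.1, le_trans (le_of_lt hx.2) hτΙ.2⟩, hlt x hx⟩
      have hτcl : τ ∈ closure (Ico s τ) := by
        rw [closure_Ico (ne_of_lt h)]; exact ⟨hsτ, le_refl τ⟩
      have := hC.closure_subset (closure_mono hsub hτcl)
      exact this.2
  have haM : a ≤ MM g s τ := by
    refine leM hsτ fun x hx => ?_
    rcases eq_or_lt_of_le hx.2 with h | h
    · rw [h]; exact hgτa
    · exact hlt x ⟨hx.1, h⟩
  -- τ < t
  have hτltt : τ < t := by
    rcases eq_or_lt_of_le hτt with h | h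
    · exfalso; rw [h] at haM; linarith
    · exact h
  -- g τ = a
  have hgτ : g τ = a := by
    by_contra hne
    have hgt : a < g τ := lt_of_le_of_ne hgτa (Ne.symm hne)
    have hcont := hg τ hτΙ
    rw [Metric.continuousWithinAt_iff] at hcont
    obtain ⟨δ, hδ, hball⟩ := hcont (g τ - a) (by linarith)
    set q := min (τ + δ/2) t with hq
    have hτq : τ < q := lt_min (by linarith) hτltt
    have hqt : q ≤ t := min_le_right _ _
    have hqS : q ∈ S := by
      refine ⟨⟨le_trans hsτ (le_of_lt hτq), hqt⟩, ?_⟩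
      rw [Msplit hg hs (le_trans hqt ht) hsτ (le_of_lt hτq), le_min_iff]
      refine ⟨haM, leM (le_of_lt hτq) fun x hx => ?_⟩
      have hxΙ : x ∈ Icc 0 σ := ⟨le_trans hτΙ.1 hx.1, le_trans hx.2 (le_trans hqt ht)⟩
      have hxd : dist x τ < δ := by
        rw [Real.dist_eq, abs_of_nonneg (by linarith [hx.1] : (0:ℝ) ≤ x - τ)]
        have : x ≤ τ + δ/2 := le_trans hx.2 (min_le_left _ _)
        linarith
      have := hball hxΙ hxd
      rw [Real.dist_eq, abs_lt] at this
      linarith [this.1]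
    have := le_csSup hSbdd hqS
    linarith
  have hMsτ : MM g s τ = a := le_antisymm (by rw [← hgτ]; exact Mle hg hs hτΙ.2 ⟨hsτ, le_refl τ⟩) haM
  have hMτt : MM g τ t = MM g s t := by
    have := Msplit hg hs ht hsτ hτt
    rw [hMsτ] at this
    have hle : MM g s t ≤ MM g τ t := Mmono hg hs ht hτt (Icc_subset_Icc hsτ (le_refl t))
    rcases min_cases a (MM g τ t) with ⟨h1, h2⟩ | ⟨h1, h2⟩
    · rw [h1] at this; linarith
    · rw [h1] at this; linarith
  exact ⟨τ, ⟨hsτ, hτt⟩, hgτ, hMsτ, hMτt⟩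

lemma L2 (hg : ContinuousOn g (Icc 0 σ)) {s t a : ℝ} (hs : 0 ≤ s) (hst : s ≤ t) (ht : t ≤ σ)
    (ha : MM g s t < a) (hag : a ≤ g t) :
    ∃ τ ∈ Icc s t, g τ = a ∧ MM g τ t = a ∧ MM g s τ = MM g s t := by
  set S : Set ℝ := {q ∈ Icc s t | a ≤ MM g q t} with hS
  have htS : t ∈ S := by
    refine ⟨⟨hst, le_refl t⟩, ?_⟩
    have : MM g t t = g t := by
      rw [MM, Icc_self, image_singleton, csInf_singleton]
    rw [this]; exact hag
  have hSne : S.Nonempty := ⟨t, htS⟩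
  have hSbdd : BddBelow S := ⟨s, fun q hq => hq.1.1⟩
  set τ := sInf S with hτdef
  have hτt : τ ≤ t := csInf_le hSbdd htS
  have hsτ : s ≤ τ := le_csInf hSne fun q hq => hq.1.1
  have hτΙ : τ ∈ Icc 0 σ := ⟨le_trans hs hsτ, le_trans hτt ht⟩
  have hlt : ∀ x ∈ Ioc τ t, a ≤ g x := by
    intro x hx
    obtain ⟨q, hqS, hxq⟩ := exists_lt_of_csInf_lt hSne hx.1
    exact le_trans hqS.2 (Mle hg (le_trans hs hqS.1.1) ht ⟨le_of_lt hxq, hx.2⟩)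
  have hgτa : a ≤ g τ := by
    rcases eq_or_lt_of_le hτt with h | h
    · rw [h]; exact hag
    · have hC : IsClosed {x ∈ Icc (0:ℝ) σ | g x ∈ Ici a} :=
        hg.preimage_isClosed_of_isClosed isClosed_Icc isClosed_Ici
      have hsub : Ioc τ t ⊆ {x ∈ Icc (0:ℝ) σ | g x ∈ Ici a} := by
        intro x hx
        exact ⟨⟨le_trans hτΙ.1 (le_of_lt hx.1), le_trans hx.2 ht⟩, hlt x hx⟩
      have hτcl : τ ∈ closure (Ioc τ t) := by
        rw [closure_Ioc (ne_of_lt h)]; exact ⟨le_refl τ, le_of_lt h⟩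
      have := hC.closure_subset (closure_mono hsub hτcl)
      exact this.2
  have haM : a ≤ MM g τ t := by
    refine leM hτt fun x hx => ?_
    rcases eq_or_lt_of_le hx.1 with h | h
    · rw [← h]; exact hgτa
    · exact hlt x ⟨h, hx.2⟩
  have hτlts : s < τ := by
    rcases eq_or_lt_of_le hsτ with h | h
    · exfalso; rw [← h] at haM; linarith
    · exact h
  have hgτ : g τ = a := by
    by_contra hne
    have hgt : a < g τ := lt_of_le_of_ne hgτa (Ne.symm hne)
    have hcont := hg τ hτΙ
    rw [Metric.continuousWithinAt_iff] at hcont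
    obtain ⟨δ, hδ, hball⟩ := hcont (g τ - a) (by linarith)
    set q := max (τ - δ/2) s with hq
    have hτq : q < τ := max_lt (by linarith) hτlts
    have hqs : s ≤ q := le_max_right _ _
    have hqS : q ∈ S := by
      refine ⟨⟨hqs, le_trans (le_of_lt hτq) hτt⟩, ?_⟩
      rw [Msplit hg (le_trans hs hqs) ht (le_of_lt hτq) hτt, le_min_iff]
      refine ⟨leM (le_of_lt hτq) fun x hx => ?_, haM⟩
      have hxΙ : x ∈ Icc 0 σ := ⟨le_trans (le_trans hs hqs) hx.1, le_trans hx.2 hτΙ.2⟩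
      have hxd : dist x τ < δ := by
        rw [Real.dist_eq, abs_of_nonpos (by linarith [hx.2] : x - τ ≤ 0)]
        have : τ - δ/2 ≤ x := le_trans (le_max_left _ _) hx.1
        linarith
      have := hball hxΙ hxd
      rw [Real.dist_eq, abs_lt] at this
      linarith [this.1]
    have := csInf_le hSbdd hqS
    linarith
  have hMτt : MM g τ t = a := le_antisymm (by rw [← hgτ]; exact Mle hg hτΙ.1 ht ⟨le_refl τ, hτt⟩) haM
  have hMsτ : MM g s τ = MM g s t := by
    have := Msplit hg hs ht hsτ hτt
    rw [hMτt] at this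
    have hle : MM g s t ≤ MM g s τ := Mmono hg hs ht hsτ (Icc_subset_Icc (le_refl s) hτt)
    rcases min_cases (MM g s τ) a with ⟨h1, h2⟩ | ⟨h1, h2⟩
    · rw [h1] at this; linarith
    · rw [h1] at this; linarith
  exact ⟨τ, ⟨hsτ, hτt⟩, hgτ, hMτt, hMsτ⟩


end RealTreeAux


lemma key6 (a b c d e f : ℝ) (hab : a ≤ b) (hac : a ≤ c)
    (h1 : min a c ≤ e) (h2 : min b d ≤ e) (h3 : min a b ≤ f) (h4 : min c d ≤ f) :
    min (a + d) (b + c) ≤ e + f := by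
  rw [min_eq_left hac] at h1
  rw [min_eq_left hab] at h3
  rcases le_total b d with h | h
  · rw [min_eq_left h] at h2
    rcases le_total c d with h' | h'
    · rw [min_eq_left h'] at h4
      exact min_le_iff.2 (Or.inr (by linarith))
    · rw [min_eq_right h'] at h4
      exact min_le_iff.2 (Or.inl (by linarith))
  · rw [min_eq_right h] at h2
    rcases le_total c d with h' | h'
    · rw [min_eq_left h'] at h4
      exact min_le_iff.2 (Or.inl (by linarith))
    · rw [min_eq_right h'] at h4
      exact min_le_iff.2 (Or.inl (by linarith))

lemma key6full {a b c d e f : ℝ}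
    (h1 : min a c ≤ e) (h2 : min b d ≤ e) (h3 : min a b ≤ f) (h4 : min c d ≤ f) :
    min (a + d) (b + c) ≤ e + f := by
  have swap : ∀ x y : ℝ, min x y ≤ e + f → min y x ≤ e + f := by
    intro x y h; rwa [min_comm]
  rcases le_total a b with hab | hab
  · rcases le_total c d with hcd | hcd
    · rcases le_total a c with hac | hac
      · exact key6 a b c d e f hab hac h1 h2 h3 h4
      · have := key6 c d a b e f hcd hac (by rwa [min_comm] at h1) (by rwa [min_comm] at h2)
          h4 h3
        rcases min_le_iff.1 this with h | h
        · exact min_le_iff.2 (Or.inr (by linarith))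
        · exact min_le_iff.2 (Or.inl (by linarith))
    · rcases le_total a d with had | had
      · exact key6 a b c d e f hab (le_trans had hcd) h1 h2 h3 h4
      · have := key6 d c b a e f hcd (le_trans had hab) (by rwa [min_comm] at h2) (by rwa [min_comm] at h1)
          (by rwa [min_comm] at h4) (by rwa [min_comm] at h3)
        rcases min_le_iff.1 this with h | h
        · exact min_le_iff.2 (Or.inl (by linarith))
        · exact min_le_iff.2 (Or.inr (by linarith))
  · rcases le_total c d with hcd | hcd
    · rcases le_total b c with hbc | hbc
      · have := key6 b a d c e f hab (le_trans hbc hcd) h2 h1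
          (by rwa [min_comm] at h3) (by rwa [min_comm] at h4)
        rcases min_le_iff.1 this with h | h
        · exact min_le_iff.2 (Or.inr (by linarith))
        · exact min_le_iff.2 (Or.inl (by linarith))
      · have := key6 c d a b e f hcd (le_trans hbc hab) (by rwa [min_comm] at h1) (by rwa [min_comm] at h2)
          h4 h3
        rcases min_le_iff.1 this with h | h
        · exact min_le_iff.2 (Or.inr (by linarith))
        · exact min_le_iff.2 (Or.inl (by linarith))
    · rcases le_total b d with hbd | hbd
      · have := key6 b a d c e f hab hbd h2 h1
          (by rwa [min_comm] at h3) (by rwa [min_comm] at h4)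
        rcases min_le_iff.1 this with h | h
        · exact min_le_iff.2 (Or.inr (by linarith))
        · exact min_le_iff.2 (Or.inl (by linarith))
      · have := key6 d c b a e f hcd hbd (by rwa [min_comm] at h2) (by rwa [min_comm] at h1)
          (by rwa [min_comm] at h4) (by rwa [min_comm] at h3)
        rcases min_le_iff.1 this with h | h
        · exact min_le_iff.2 (Or.inl (by linarith))
        · exact min_le_iff.2 (Or.inr (by linarith))

section aux2
variable {σ : ℝ} {g : ℝ → ℝ}

lemma icc_cover {x y z w : ℝ} (hw : w ∈ Icc (min x y) (max x y)) :
    w ∈ Icc (min x z) (max x z) ∨ w ∈ Icc (min z y) (max z y) := by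
  rcases le_total w z with hwz | hwz
  · rcases le_or_gt x w with hx | hx
    · exact Or.inl ⟨le_trans (min_le_left x z) hx, le_trans hwz (le_max_right x z)⟩
    · rcases le_or_gt y w with hy | hy
      · exact Or.inr ⟨le_trans (min_le_right z y) hy, le_trans hwz (le_max_left z y)⟩
      · exact absurd hw.1 (not_le.2 (lt_min hx hy))
  · rcases le_or_gt w x with hx | hx
    · exact Or.inl ⟨le_trans (min_le_right x z) hwz, le_trans hx (le_max_left x z)⟩
    · rcases le_or_gt w y with hy | hy
      · exact Or.inr ⟨le_trans (min_le_left z y) hwz, le_trans hy (le_max_right z y)⟩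
      · exact absurd hw.2 (not_le.2 (max_lt hx hy))
  
lemma Ktriple (hg : ContinuousOn g (Icc 0 σ)) {x y z : ℝ} (hx : x ∈ Icc 0 σ)
    (hy : y ∈ Icc 0 σ) (hz : z ∈ Icc 0 σ) :
    min (MM g (min x z) (max x z)) (MM g (min z y) (max z y))
      ≤ MM g (min x y) (max x y) := by
  refine leM min_le_max fun w hw => ?_
  rcases icc_cover (z := z) hw with h | h
  · exact le_trans (min_le_left _ _)
      (Mle hg (le_min hx.1 hz.1) (max_le hx.2 hz.2) h)
  · exact le_trans (min_le_right _ _)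
      (Mle hg (le_min hz.1 hy.1) (max_le hz.2 hy.2) h)

lemma msymm (g : ℝ → ℝ) (x y : ℝ) :
    MM g (min x y) (max x y) = MM g (min y x) (max y x) := by
  rw [min_comm, max_comm]

end aux2

section aux3
variable {σ : ℝ} {g : ℝ → ℝ} {T : Type*} [MetricSpace T] {p : ℝ → T}

lemma fourpoint (hg : ContinuousOn g (Icc 0 σ))
    (hsurj : ∀ x : T, ∃ s ∈ Set.Icc (0:ℝ) σ, p s = x)
    (hdist : ∀ s ∈ Set.Icc (0:ℝ) σ, ∀ t ∈ Set.Icc (0:ℝ) σ,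
      dist (p s) (p t) = g s + g t - 2 * sInf (g '' Set.Icc (min s t) (max s t)))
    (x y z w : T) :
    dist x y + dist z w ≤ max (dist x z + dist y w) (dist x w + dist y z) := by
  obtain ⟨s1, hs1, rfl⟩ := hsurj x
  obtain ⟨s2, hs2, rfl⟩ := hsurj y
  obtain ⟨s3, hs3, rfl⟩ := hsurj z
  obtain ⟨s4, hs4, rfl⟩ := hsurj w
  have e12 : dist (p s1) (p s2) = g s1 + g s2 - 2 * MM g (min s1 s2) (max s1 s2) :=
    hdist s1 hs1 s2 hs2
  have e34 : dist (p s3) (p s4) = g s3 + g s4 - 2 * MM g (min s3 s4) (max s3 s4) :=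
    hdist s3 hs3 s4 hs4
  have e13 : dist (p s1) (p s3) = g s1 + g s3 - 2 * MM g (min s1 s3) (max s1 s3) :=
    hdist s1 hs1 s3 hs3
  have e24 : dist (p s2) (p s4) = g s2 + g s4 - 2 * MM g (min s2 s4) (max s2 s4) :=
    hdist s2 hs2 s4 hs4
  have e14 : dist (p s1) (p s4) = g s1 + g s4 - 2 * MM g (min s1 s4) (max s1 s4) :=
    hdist s1 hs1 s4 hs4
  have e23 : dist (p s2) (p s3) = g s2 + g s3 - 2 * MM g (min s2 s3) (max s2 s3) :=
    hdist s2 hs2 s3 hs3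
  have h1 : min (MM g (min s1 s3) (max s1 s3)) (MM g (min s3 s2) (max s3 s2))
      ≤ MM g (min s1 s2) (max s1 s2) := Ktriple hg hs1 hs2 hs3
  have h2 : min (MM g (min s1 s4) (max s1 s4)) (MM g (min s4 s2) (max s4 s2))
      ≤ MM g (min s1 s2) (max s1 s2) := Ktriple hg hs1 hs2 hs4
  have h3 : min (MM g (min s3 s1) (max s3 s1)) (MM g (min s1 s4) (max s1 s4))
      ≤ MM g (min s3 s4) (max s3 s4) := Ktriple hg hs3 hs4 hs1
  have h4 : min (MM g (min s3 s2) (max s3 s2)) (MM g (min s2 s4) (max s2 s4))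
      ≤ MM g (min s3 s4) (max s3 s4) := Ktriple hg hs3 hs4 hs2
  rw [msymm g s3 s2] at h1
  rw [msymm g s4 s2] at h2
  rw [msymm g s3 s1] at h3
  rw [msymm g s3 s2] at h4
  have key := key6full (a := MM g (min s1 s3) (max s1 s3)) (b := MM g (min s1 s4) (max s1 s4))
    (c := MM g (min s2 s3) (max s2 s3)) (d := MM g (min s2 s4) (max s2 s4))
    (e := MM g (min s1 s2) (max s1 s2)) (f := MM g (min s3 s4) (max s3 s4)) h1 h2 h3 h4
  rw [e12, e34, e13, e24, e14, e23]
  rcases min_le_iff.1 key with h | h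
  · exact le_max_iff.2 (Or.inl (by linarith))
  · exact le_max_iff.2 (Or.inr (by linarith))

end aux3


section sep
variable {T : Type*} [MetricSpace T]

/-- In a 0-hyperbolic metric space, a point `c` between `a` and `b` lies in every
preconnected set containing `a` and `b`. -/
lemma sep (hfp : ∀ x y z w : T, dist x y + dist z w ≤ max (dist x z + dist y w)
      (dist x w + dist y z))
    (a b c : T) (K : Set T) (hK : IsPreconnected K) (ha : a ∈ K) (hb : b ∈ K)
    (habc : dist a b = dist a c + dist c b) : c ∈ K := by
  by_contra hc
  rcases eq_or_lt_of_le (dist_nonneg : 0 ≤ dist a c) with hac | hac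
  · exact hc ((dist_eq_zero.1 hac.symm) ▸ ha)
  rcases eq_or_lt_of_le (dist_nonneg : 0 ≤ dist c b) with hcb | hcb
  · refine hc ?_
    have hcb' : c = b := dist_eq_zero.1 hcb.symm
    rw [hcb']; exact hb
  set A : Set T := {z | dist a z = dist a c + dist c z} with hA
  have hball : ∀ z0 ∈ A, ∀ z, dist z0 z < dist z0 c → z ∈ A := by
    intro z0 hz0 z hz
    have hz0' : dist a z0 = dist a c + dist c z0 := hz0
    have h4 := hfp a z0 c z
    have e1 : dist c z0 = dist z0 c := dist_comm c z0
    have e2 : dist z z0 = dist z0 z := dist_comm z z0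
    rcases le_max_iff.1 h4 with h | h
    · exfalso
      rw [hz0'] at h
      have htr : dist z0 c ≤ dist c z + dist z z0 := dist_comm z0 c ▸ dist_triangle c z z0
      have hnn : (0:ℝ) ≤ dist c z := dist_nonneg
      linarith
    · rw [hz0'] at h
      have htr : dist a z ≤ dist a c + dist c z := dist_triangle a c z
      have hge : dist a c + dist c z ≤ dist a z := by linarith
      exact le_antisymm htr hge
  set U : Set T := ⋃ z0 ∈ A \ {c}, Metric.ball z0 (dist z0 c) with hU
  have hmem : ∀ z ∈ A, z ≠ c → z ∈ U := by
    intro z hz hne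
    simp only [hU, mem_iUnion, Metric.mem_ball]
    exact ⟨z, ⟨⟨hz, fun h => hne (mem_singleton_iff.1 h)⟩,
      Metric.mem_ball_self (dist_pos.2 hne)⟩⟩
  have hUA : U ⊆ A := by
    rintro z hzU
    simp only [hU, mem_iUnion, Metric.mem_ball] at hzU
    obtain ⟨z0, ⟨hz0A, _⟩, hz⟩ := hzU
    exact hball z0 hz0A z (by rwa [dist_comm])
  have hUopen : IsOpen U := isOpen_biUnion fun _ _ => Metric.isOpen_ball
  have hAclosed : IsClosed A := by
    have he : A = (fun z => dist a z - dist a c - dist c z) ⁻¹' {0} := by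
      ext z; simp [hA, sub_eq_zero, sub_sub]
    rw [he]
    exact IsClosed.preimage
      (((continuous_const.dist continuous_id).sub continuous_const).sub
        (continuous_const.dist continuous_id)) isClosed_singleton
  have hVopen : IsOpen Aᶜ := hAclosed.isOpen_compl
  have hcover : K ⊆ U ∪ Aᶜ := by
    intro z hz
    by_cases hzA : z ∈ A
    · exact Or.inl (hmem z hzA (fun h => hc (h ▸ hz)))
    · exact Or.inr hzA
  have hbU : b ∈ K ∩ U := by
    refine ⟨hb, hmem b habc (fun h => ?_)⟩
    rw [h, dist_self] at hcb; exact lt_irrefl 0 hcb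
  have haV : a ∈ K ∩ Aᶜ := by
    refine ⟨ha, fun hzA => ?_⟩
    have h1 : dist a a = dist a c + dist c a := hzA
    rw [dist_self] at h1
    have h2 : dist c a = dist a c := dist_comm c a
    linarith
  obtain ⟨z, hzK, hzU, hzV⟩ := hK U Aᶜ hUopen hVopen hcover ⟨b, hbU⟩ ⟨a, haV⟩
  exact hzV (hUA hzU)

/-- uniqueness of the isometric arc, from the four-point condition. -/
lemma unique_arc (hfp : ∀ x y z w : T, dist x y + dist z w ≤ max (dist x z + dist y w)
      (dist x w + dist y z))
    {u v w1 w2 : T} {x D : ℝ} (hD : D = dist u v)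
    (h1u : dist u w1 = x) (h1v : dist w1 v = D - x)
    (h2u : dist u w2 = x) (h2v : dist w2 v = D - x) : w1 = w2 := by
  have h4 := hfp w1 w2 u v
  rw [dist_comm w1 u] at h4
  rw [dist_comm w2 u] at h4
  rw [h1u, h2u, h1v, h2v, ← hD] at h4
  have : dist w1 w2 ≤ 0 := by
    rcases max_cases (x + (D - x)) (D - x + x) with ⟨h, _⟩ | ⟨h, _⟩ <;>
      (rw [h] at h4; linarith)
  exact dist_eq_zero.1 (le_antisymm this dist_nonneg)

end sep

section GeoAux
variable {σ : ℝ} {g : ℝ → ℝ}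
lemma exists_geo (hg : ContinuousOn g (Icc 0 σ))
    {T : Type*} [MetricSpace T] {p : ℝ → T}
    (hdist : ∀ s ∈ Icc (0:ℝ) σ, ∀ t ∈ Icc (0:ℝ) σ,
      dist (p s) (p t) = g s + g t - 2 * sInf (g '' Icc (min s t) (max s t)))
    {s t : ℝ} (hs : s ∈ Icc (0:ℝ) σ) (ht : t ∈ Icc (0:ℝ) σ) (hst : s ≤ t) :
    ∃ F : ℝ → T, F 0 = p s ∧ F (dist (p s) (p t)) = p t ∧
      ∀ r1 ∈ Icc (0:ℝ) (dist (p s) (p t)), ∀ r2 ∈ Icc (0:ℝ) (dist (p s) (p t)),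
        dist (F r1) (F r2) = |r1 - r2| := by
  classical
  have hd : ∀ a b : ℝ, a ∈ Icc (0:ℝ) σ → b ∈ Icc (0:ℝ) σ → a ≤ b →
      dist (p a) (p b) = g a + g b - 2 * MM g a b := by
    intro a b ha hb hab
    rw [hdist a ha b hb, min_eq_left hab, max_eq_right hab]; rfl
  set m := MM g s t with hm
  set D := dist (p s) (p t) with hDdef
  have hD : D = g s + g t - 2 * m := hd s t hs ht hst
  have hms : m ≤ g s := Mle hg hs.1 ht.2 ⟨le_refl s, hst⟩
  have hmt : m ≤ g t := Mle hg hs.1 ht.2 ⟨hst, le_refl t⟩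
  obtain ⟨ρ, hρ, hgρ⟩ := Mmem hg hs.1 hst ht.2
  have hsub : Icc s t ⊆ Icc 0 σ := Icc_subset_Icc hs.1 ht.2
  have hMsρ : MM g s ρ = m := by
    refine le_antisymm (le_trans (Mle hg hs.1 (le_trans hρ.2 ht.2) ⟨hρ.1, le_refl ρ⟩) hgρ.le) ?_
    exact Mmono hg hs.1 ht.2 hρ.1 (Icc_subset_Icc (le_refl s) hρ.2)
  have hMρt : MM g ρ t = m := by
    refine le_antisymm (le_trans (Mle hg (le_trans hs.1 hρ.1) ht.2 ⟨le_refl ρ, hρ.2⟩) hgρ.le) ?_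
    exact Mmono hg hs.1 ht.2 hρ.2 (Icc_subset_Icc hρ.1 (le_refl t))
  have A1 : ∀ r : ℝ, 0 ≤ r → r < g s - m →
      ∃ τ ∈ Icc s t, g τ = g s - r ∧ MM g s τ = g s - r ∧ MM g τ t = m :=
    fun r h0 h1 => L1 hg hs.1 hst ht.2 (by rw [← hm]; linarith) (by linarith)
  have A2 : ∀ r : ℝ, r ≤ D → g s - m < r →
      ∃ τ ∈ Icc s t, g τ = g t - (D - r) ∧ MM g τ t = g t - (D - r) ∧ MM g s τ = m :=
    fun r h0 h1 => L2 hg hs.1 hst ht.2 (by rw [← hm]; linarith [hD]) (by linarith [hD])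
  set F : ℝ → T := fun r =>
    if h : 0 ≤ r ∧ r < g s - m then p (A1 r h.1 h.2).choose
    else if h2 : g s - m < r ∧ r ≤ D then p (A2 r h2.2 h2.1).choose
    else p ρ with hF
  have spec : ∀ r : ℝ, 0 ≤ r → r ≤ D → ∃ τ ∈ Icc s t, F r = p τ ∧
      ((r ≤ g s - m ∧ g τ = g s - r ∧ MM g s τ = g s - r ∧ MM g τ t = m) ∨
       (g s - m ≤ r ∧ g τ = g t - (D - r) ∧ MM g τ t = g t - (D - r) ∧ MM g s τ = m)) := by
    intro r h0 hrD
    by_cases h : 0 ≤ r ∧ r < g s - m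
    · obtain ⟨hτΙ, h1, h2, h3⟩ := (A1 r h.1 h.2).choose_spec
      exact ⟨_, hτΙ, by rw [hF]; simp only [dif_pos h], Or.inl ⟨h.2.le, h1, h2, h3⟩⟩
    · by_cases h2 : g s - m < r ∧ r ≤ D
      · obtain ⟨hτΙ, ha, hb, hc⟩ := (A2 r h2.2 h2.1).choose_spec
        exact ⟨_, hτΙ, by rw [hF]; simp only [dif_neg h, dif_pos h2],
          Or.inr ⟨h2.1.le, ha, hb, hc⟩⟩
      · have hr : r = g s - m := by
          push_neg at h h2
          exact le_antisymm (not_lt.1 fun hlt => absurd (h2 hlt) (not_lt.2 hrD)) (h h0)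
        exact ⟨ρ, hρ, by rw [hF]; simp only [dif_neg h, dif_neg h2],
          Or.inl ⟨hr.le, by rw [hgρ, ← hm, hr]; ring, by rw [hMsρ, hr]; ring,
            by rw [hMρt]⟩⟩
  have h0τ : ∀ {τ : ℝ}, τ ∈ Icc s t → 0 ≤ τ := fun h => le_trans hs.1 h.1
  have hτσ : ∀ {τ : ℝ}, τ ∈ Icc s t → τ ≤ σ := fun h => le_trans h.2 ht.2
  have hXm : ∀ {τa τb : ℝ}, τa ∈ Icc s t → τb ∈ Icc s t → τa ≤ τb → m ≤ MM g τa τb :=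
    fun ha hb hab => Mmono hg hs.1 ht.2 hab (Icc_subset_Icc ha.1 hb.2)
  have pair : ∀ r1 r2 : ℝ, 0 ≤ r1 → r1 ≤ r2 → r2 ≤ D →
      dist (F r1) (F r2) = r2 - r1 := by
    intro r1 r2 h1 h12 h2D
    obtain ⟨τ1, hτ1, hF1, hc1⟩ := spec r1 h1 (le_trans h12 h2D)
    obtain ⟨τ2, hτ2, hF2, hc2⟩ := spec r2 (le_trans h1 h12) h2D
    rw [hF1, hF2]
    rcases hc1 with ⟨hr1, hg1, hs1, ht1⟩ | ⟨hr1, hg1, ht1, hs1⟩ <;>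
      rcases hc2 with ⟨hr2, hg2, hs2, ht2⟩ | ⟨hr2, hg2, ht2, hs2⟩
    · -- both of descending type
      rcases le_total τ1 τ2 with hττ | hττ
      · have hsplit := Msplit hg hs.1 (hτσ hτ2) hτ1.1 hττ
        rw [hs1, hs2] at hsplit
        have hXle : MM g τ1 τ2 ≤ g τ1 := Mle hg (h0τ hτ1) (hτσ hτ2) ⟨le_refl τ1, hττ⟩
        rw [hg1] at hXle
        rw [hd τ1 τ2 (hsub hτ1) (hsub hτ2) hττ, hg1, hg2]
        rcases min_cases (g s - r1) (MM g τ1 τ2) with ⟨he, hle⟩ | ⟨he, hle⟩ <;>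
          (rw [he] at hsplit; linarith)
      · have hsplit := Msplit hg hs.1 (hτσ hτ1) hτ2.1 hττ
        rw [hs1, hs2] at hsplit
        have hXle : MM g τ2 τ1 ≤ g τ2 := Mle hg (h0τ hτ2) (hτσ hτ1) ⟨le_refl τ2, hττ⟩
        rw [hg2] at hXle
        rw [dist_comm, hd τ2 τ1 (hsub hτ2) (hsub hτ1) hττ, hg1, hg2]
        rcases min_cases (g s - r2) (MM g τ2 τ1) with ⟨he, hle⟩ | ⟨he, hle⟩ <;>
          (rw [he] at hsplit; linarith)
    · -- r1 descending, r2 ascending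
      rcases le_total τ1 τ2 with hττ | hττ
      · have hsplit := Msplit hg hs.1 (hτσ hτ2) hτ1.1 hττ
        rw [hs1, hs2] at hsplit
        have hXle : MM g τ1 τ2 ≤ g τ1 := Mle hg (h0τ hτ1) (hτσ hτ2) ⟨le_refl τ1, hττ⟩
        rw [hg1] at hXle
        have hXm' := hXm hτ1 hτ2 hττ
        rw [hd τ1 τ2 (hsub hτ1) (hsub hτ2) hττ, hg1, hg2]
        rcases min_cases (g s - r1) (MM g τ1 τ2) with ⟨he, hle⟩ | ⟨he, hle⟩ <;>
          (rw [he] at hsplit; linarith)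
      · have hsplit := Msplit hg (h0τ hτ2) ht.2 hττ hτ1.2
        rw [ht1, ht2] at hsplit
        have hXle : MM g τ2 τ1 ≤ g τ2 := Mle hg (h0τ hτ2) (hτσ hτ1) ⟨le_refl τ2, hττ⟩
        rw [hg2] at hXle
        have hXm' := hXm hτ2 hτ1 hττ
        rw [dist_comm, hd τ2 τ1 (hsub hτ2) (hsub hτ1) hττ, hg1, hg2]
        rcases min_cases (MM g τ2 τ1) (m) with ⟨he, hle⟩ | ⟨he, hle⟩ <;>
          (rw [he] at hsplit; linarith)
    · -- r1 ascending, r2 descending : forces r1 = r2 = g s - m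
      have hXm12 : ∀ {τa τb : ℝ}, τa ∈ Icc s t → τb ∈ Icc s t → τa ≤ τb →
          dist (p τa) (p τb) = g τa + g τb - 2 * MM g τa τb :=
        fun ha hb hab => hd _ _ (hsub ha) (hsub hb) hab
      rcases le_total τ1 τ2 with hττ | hττ
      · have hXle : MM g τ1 τ2 ≤ g τ1 := Mle hg (h0τ hτ1) (hτσ hτ2) ⟨le_refl τ1, hττ⟩
        have hXm' := hXm hτ1 hτ2 hττ
        rw [hg1] at hXle
        rw [hXm12 hτ1 hτ2 hττ, hg1, hg2]
        linarith
      · have hXle : MM g τ2 τ1 ≤ g τ2 := Mle hg (h0τ hτ2) (hτσ hτ1) ⟨le_refl τ2, hττ⟩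
        have hXm' := hXm hτ2 hτ1 hττ
        rw [hg2] at hXle
        rw [dist_comm, hXm12 hτ2 hτ1 hττ, hg1, hg2]
        linarith
    · -- both ascending
      rcases le_total τ1 τ2 with hττ | hττ
      · have hsplit := Msplit hg (h0τ hτ1) ht.2 hττ hτ2.2
        rw [ht1, ht2] at hsplit
        have hXle : MM g τ1 τ2 ≤ g τ2 := Mle hg (h0τ hτ1) (hτσ hτ2) ⟨hττ, le_refl τ2⟩
        rw [hg2] at hXle
        rw [hd τ1 τ2 (hsub hτ1) (hsub hτ2) hττ, hg1, hg2]
        rcases min_cases (MM g τ1 τ2) (g t - (D - r2)) with ⟨he, hle⟩ | ⟨he, hle⟩ <;>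
          (rw [he] at hsplit; linarith)
      · have hsplit := Msplit hg (h0τ hτ2) ht.2 hττ hτ1.2
        rw [ht1, ht2] at hsplit
        have hXle : MM g τ2 τ1 ≤ g τ1 := Mle hg (h0τ hτ2) (hτσ hτ1) ⟨hττ, le_refl τ1⟩
        rw [hg1] at hXle
        rw [dist_comm, hd τ2 τ1 (hsub hτ2) (hsub hτ1) hττ, hg1, hg2]
        rcases min_cases (MM g τ2 τ1) (g t - (D - r1)) with ⟨he, hle⟩ | ⟨he, hle⟩ <;>
          (rw [he] at hsplit; linarith)
  have h0D : (0:ℝ) ≤ D := hDdef ▸ dist_nonneg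
  -- endpoint identification
  have hF0 : F 0 = p s := by
    obtain ⟨τ, hτ, hFτ, hc⟩ := spec 0 (le_refl 0) h0D
    have : dist (p s) (F 0) = 0 := by
      rw [hFτ, hd s τ hs (hsub hτ) hτ.1]
      rcases hc with ⟨hr, hgτ, hsτ, htτ⟩ | ⟨hr, hgτ, htτ, hsτ⟩ <;>
        (rw [hgτ, hsτ]; linarith)
    exact (dist_eq_zero.1 this).symm
  have hFD : F D = p t := by
    obtain ⟨τ, hτ, hFτ, hc⟩ := spec D h0D (le_refl D)
    have : dist (F D) (p t) = 0 := by
      rw [hFτ, hd τ t (hsub hτ) ht hτ.2]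
      rcases hc with ⟨hr, hgτ, hsτ, htτ⟩ | ⟨hr, hgτ, htτ, hsτ⟩ <;>
        (rw [hgτ, htτ]; linarith)
    exact dist_eq_zero.1 this
  refine ⟨F, hF0, hFD, ?_⟩
  intro r1 hr1 r2 hr2
  rcases le_total r1 r2 with h | h
  · rw [pair r1 r2 hr1.1 h hr2.2, abs_sub_comm, abs_of_nonneg (by linarith)]
  · rw [dist_comm, pair r2 r1 hr2.1 h hr1.2, abs_of_nonneg (by linarith)]


end GeoAux


/-- the quotient metric space coded by a continuous excursion `g` on
`[0,σ]` (with `g(0) = g(σ) = 0`) is a real tree: between any two points there is a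
unique isometric arc, and every injective continuous path between them has the same
image as this arc.  The quotient is formalized by a metric space `T` together with a
surjection `p : [0,σ] → T` realizing the tree pseudodistance. -/
theorem stmt_16 (σ : ℝ) (hσ : 0 < σ) (g : ℝ → ℝ)
    (hg : ContinuousOn g (Set.Icc 0 σ))
    (hgnn : ∀ s ∈ Set.Icc (0:ℝ) σ, 0 ≤ g s)
    (hg0 : g 0 = 0) (hgσ : g σ = 0)
    (T : Type*) [MetricSpace T] (p : ℝ → T)
    (hsurj : ∀ x : T, ∃ s ∈ Set.Icc (0:ℝ) σ, p s = x)
    (hdist : ∀ s ∈ Set.Icc (0:ℝ) σ, ∀ t ∈ Set.Icc (0:ℝ) σ,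
      dist (p s) (p t) = g s + g t - 2 * sInf (g '' Set.Icc (min s t) (max s t))) :
    ∀ u v : T,
      ∃! f : Set.Icc (0:ℝ) (dist u v) → T,
        ((∀ x y : Set.Icc (0:ℝ) (dist u v), dist (f x) (f y) = |(x:ℝ) - (y:ℝ)|) ∧
          f ⟨0, Set.left_mem_Icc.2 dist_nonneg⟩ = u ∧
          f ⟨dist u v, Set.right_mem_Icc.2 dist_nonneg⟩ = v) ∧
        (∀ w : ℝ → T, ContinuousOn w (Set.Icc 0 1) → Set.InjOn w (Set.Icc 0 1) →
          w 0 = u → w 1 = v → w '' Set.Icc 0 1 = Set.range f) := by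
  intro u v
  classical
  have hfp : ∀ x y z w : T, dist x y + dist z w ≤ max (dist x z + dist y w)
      (dist x w + dist y z) := fourpoint hg hsurj hdist
  obtain ⟨s, hs, rfl⟩ := hsurj u
  obtain ⟨t, ht, rfl⟩ := hsurj v
  set u := p s with hu
  set v := p t with hv
  set D := dist u v with hD
  have hexists : ∃ F : ℝ → T, F 0 = u ∧ F D = v ∧
      ∀ r1 ∈ Icc (0:ℝ) D, ∀ r2 ∈ Icc (0:ℝ) D, dist (F r1) (F r2) = |r1 - r2| := by
    rcases le_total s t with hst | hst
    · exact exists_geo hg hdist hs ht hst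
    · obtain ⟨F, h0, hDD, hiso⟩ := exists_geo hg hdist ht hs hst
      have hcomm : dist v u = D := dist_comm v u
      refine ⟨fun r => F (D - r), by show F (D - 0) = u; rw [sub_zero, ← hcomm]; exact hDD, by
        show F (D - D) = v; rw [sub_self]; exact h0, ?_⟩
      intro r1 hr1 r2 hr2
      have m1 : D - r1 ∈ Icc (0:ℝ) (dist v u) := by
        rw [hcomm]; exact ⟨by linarith [hr1.2], by linarith [hr1.1]⟩
      have m2 : D - r2 ∈ Icc (0:ℝ) (dist v u) := by
        rw [hcomm]; exact ⟨by linarith [hr2.2], by linarith [hr2.1]⟩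
      rw [hiso _ m1 _ m2]
      rw [show D - r1 - (D - r2) = -(r1 - r2) by ring, abs_neg]
  obtain ⟨F, hF0, hFD, hiso⟩ := hexists
  set f : Icc (0:ℝ) D → T := fun x => F x with hf
  have hfiso : ∀ x y : Icc (0:ℝ) D, dist (f x) (f y) = |(x:ℝ) - (y:ℝ)| :=
    fun x y => hiso x x.2 y y.2
  have hf0 : f ⟨0, Set.left_mem_Icc.2 dist_nonneg⟩ = u := hF0
  have hfD : f ⟨D, Set.right_mem_Icc.2 dist_nonneg⟩ = v := hFD
  have hdu : ∀ x : Icc (0:ℝ) D, dist u (f x) = x := by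
    intro x
    rw [← hf0, hfiso]
    rw [zero_sub, abs_neg, abs_of_nonneg x.2.1]
  have hdv : ∀ x : Icc (0:ℝ) D, dist (f x) v = D - x := by
    intro x
    rw [← hfD, hfiso]
    rw [abs_of_nonpos (by linarith [x.2.2]), neg_sub]
  refine ⟨f, ⟨⟨hfiso, hf0, hfD⟩, ?_⟩, ?_⟩
  · -- every injective path has the same image
    intro w hwc hwi hw0 hw1
    apply Subset.antisymm
    · -- image of path ⊆ range f
      rintro z ⟨θ, hθ, rfl⟩
      set x : ℝ := (D + dist u (w θ) - dist v (w θ)) / 2 with hx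
      have htr1 : dist u (w θ) ≤ D + dist v (w θ) := by
        have := dist_triangle u v (w θ); linarith
      have htr2 : dist v (w θ) ≤ D + dist u (w θ) := by
        have h1 := dist_triangle v u (w θ)
        have h2 : dist v u = D := dist_comm v u
        linarith
      have hxmem : x ∈ Icc (0:ℝ) D := ⟨by rw [hx]; linarith, by rw [hx]; linarith⟩
      set c := f ⟨x, hxmem⟩ with hc
      have huc : dist u c = x := hdu ⟨x, hxmem⟩
      have hcv : dist c v = D - x := hdv ⟨x, hxmem⟩
      -- dist (w θ) c ≤ dist u (w θ) - x  and  ≤ dist v (w θ) - (D - x)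
      have h4 := hfp (w θ) c u v
      have hwu : dist (w θ) u = dist u (w θ) := dist_comm _ _
      have hwv : dist (w θ) v = dist v (w θ) := dist_comm _ _
      have hcu : dist c u = dist u c := dist_comm _ _
      rw [hwu, hwv, hcu, hcv, huc, ← hD] at h4
      have hbound : dist (w θ) c ≤ dist u (w θ) - x := by
        have heq : dist u (w θ) + (D - x) = dist v (w θ) + x := by rw [hx]; ring
        rcases max_cases (dist u (w θ) + (D - x)) (dist v (w θ) + x) with ⟨he, _⟩ | ⟨he, _⟩ <;>
          (rw [he] at h4; linarith)
      have h1 : dist u (w θ) = x + dist c (w θ) := by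
        have htri : dist u (w θ) ≤ dist u c + dist c (w θ) := dist_triangle _ _ _
        have hcwθ : dist c (w θ) = dist (w θ) c := dist_comm _ _
        rw [huc] at htri
        linarith
      have h2 : dist (w θ) v = dist (w θ) c + (D - x) := by
        have htri : dist (w θ) v ≤ dist (w θ) c + dist c v := dist_triangle _ _ _
        rw [hcv] at htri
        have heq : dist u (w θ) + (D - x) = dist v (w θ) + x := by rw [hx]; ring
        have hwv2 : dist (w θ) v = dist v (w θ) := dist_comm _ _
        linarith
      by_cases hzc : dist (w θ) c = 0
      · exact ⟨⟨x, hxmem⟩, (dist_eq_zero.1 hzc).symm⟩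
      · exfalso
        have hzcpos : 0 < dist (w θ) c := lt_of_le_of_ne dist_nonneg (Ne.symm hzc)
        have hK1 : IsPreconnected (w '' Icc 0 θ) :=
          isPreconnected_Icc.image w (hwc.mono (Icc_subset_Icc le_rfl hθ.2))
        have hK2 : IsPreconnected (w '' Icc θ 1) :=
          isPreconnected_Icc.image w (hwc.mono (Icc_subset_Icc hθ.1 le_rfl))
        have hc1 : c ∈ w '' Icc 0 θ := by
          refine sep hfp u (w θ) c _ hK1 ⟨0, ⟨le_refl 0, hθ.1⟩, hw0⟩
            ⟨θ, ⟨hθ.1, le_refl θ⟩, rfl⟩ ?_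
          rw [huc, h1]
        have hc2 : c ∈ w '' Icc θ 1 := by
          refine sep hfp (w θ) v c _ hK2 ⟨θ, ⟨le_refl θ, hθ.2⟩, rfl⟩
            ⟨1, ⟨hθ.2, le_refl 1⟩, hw1⟩ ?_
          rw [hcv, h2]
        obtain ⟨θ1, hθ1, hwθ1⟩ := hc1
        obtain ⟨θ2, hθ2, hwθ2⟩ := hc2
        have hcne : c ≠ w θ := by
          intro he; rw [he, dist_self] at hzcpos; exact lt_irrefl 0 hzcpos
        have hθ1ne : θ1 ≠ θ := fun he => hcne (he ▸ hwθ1).symm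
        have hθ2ne : θ2 ≠ θ := fun he => hcne (he ▸ hwθ2).symm
        have : θ1 = θ2 := hwi ⟨hθ1.1, le_trans hθ1.2 hθ.2⟩ ⟨le_trans hθ.1 hθ2.1, hθ2.2⟩
          (hwθ1.trans hwθ2.symm)
        have hlt : θ1 < θ := lt_of_le_of_ne hθ1.2 hθ1ne
        have hgt : θ < θ2 := lt_of_le_of_ne hθ2.1 (Ne.symm hθ2ne)
        rw [this] at hlt
        exact lt_irrefl θ (lt_trans hgt hlt)
    · -- range f ⊆ image of path
      rintro z ⟨x, rfl⟩
      have hK : IsPreconnected (w '' Icc 0 1) := isPreconnected_Icc.image w hwc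
      refine sep hfp u v (f x) _ hK ⟨0, ⟨le_refl 0, zero_le_one⟩, hw0⟩
        ⟨1, ⟨zero_le_one, le_refl 1⟩, hw1⟩ ?_
      rw [hdu x, hdv x, ← hD]
      ring
  · -- uniqueness
    rintro f' ⟨⟨hiso', h0', hD'⟩, _⟩
    funext x
    have hdu' : dist u (f' x) = x := by
      have h := hiso' ⟨0, Set.left_mem_Icc.2 dist_nonneg⟩ x
      rw [h0'] at h
      rw [h, zero_sub, abs_neg, abs_of_nonneg x.2.1]
    have hdv' : dist (f' x) v = D - x := by
      have h := hiso' x ⟨dist u v, Set.right_mem_Icc.2 dist_nonneg⟩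
      rw [hD'] at h
      rw [h, abs_of_nonpos (by linarith [x.2.2]), neg_sub]
    exact unique_arc hfp hD hdu' hdv' (hdu x) (hdv x)
end
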